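/- Let H̃ ∈ Ω_{4n} be an invertible Hermitian complex matrix and B̃ ∈ Ω_{4n} an H̃-selfadjoint matrix whose spectrum (as a 4n×4n complex matrix) contains no real numbers. Then for every positive integer m there exists an H̃-selfadjoint matrix Ã ∈ Ω_{4n} with Ã^m = B̃. -/

import Mathlib

open Matrix

noncomputable section

/-- The `k×k` upper-triangular Jordan block with eigenvalue `lam`. -/
def jordanBlock {R : Type*} [Zero R] [One R] (lam : R) (k : ℕ) : Matrix (Fin k) (Fin k) R :=
  Matrix.of fun i j => if (i : ℕ) = (j : ℕ) then lam else if (i : ℕ) + 1 = (j : ℕ) then 1 else 0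

/-- The `k×k` sip matrix: ones on the main anti-diagonal, zeros elsewhere. -/
def sip (R : Type*) [Zero R] [One R] (k : ℕ) : Matrix (Fin k) (Fin k) R :=
  Matrix.of fun i j => if (i : ℕ) + (j : ℕ) = k - 1 then 1 else 0

/-- The order-preserving identification of `Fin k ⊕ Fin k` with `Fin (2*k)`. -/
def finTwoMul (k : ℕ) : (Fin k ⊕ Fin k) ≃ Fin (2 * k) :=
  finSumFinEquiv.trans (finCongr (two_mul k).symm)

/-- Block-diagonal direct sum `M ⊕ N` of two `k×k` matrices, as a `(2k)×(2k)` matrix. -/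
def dsum2 {R : Type*} [Zero R] {k : ℕ} (M N : Matrix (Fin k) (Fin k) R) :
    Matrix (Fin (2 * k)) (Fin (2 * k)) R :=
  Matrix.reindex (finTwoMul k) (finTwoMul k) (Matrix.fromBlocks M 0 0 N)

/-- The `2n×2n` complex matrix `[[A₁, conj A₂], [−A₂, conj A₁]]`. -/
def omegaMap {n : ℕ} (A₁ A₂ : Matrix (Fin n) (Fin n) ℂ) :
    Matrix (Fin (2 * n)) (Fin (2 * n)) ℂ :=
  Matrix.reindex (finTwoMul n) (finTwoMul n)
    (Matrix.fromBlocks A₁ (A₂.map (starRingEnd ℂ)) (-A₂) (A₁.map (starRingEnd ℂ)))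

/-- Membership in the real subalgebra `Ω_{2n}` of `2n×2n` complex matrices. -/
def InOmega {n : ℕ} (M : Matrix (Fin (2 * n)) (Fin (2 * n)) ℂ) : Prop :=
  ∃ A₁ A₂ : Matrix (Fin n) (Fin n) ℂ, M = omegaMap A₁ A₂

/-!
The real minimal polynomial `Q` of `B` has no real roots, since these would be real eigenvalues
of `B`. Such a `Q` admits a real polynomial `p` with `Q ∣ p ^ m - X`: for squarefree `Q`,
interpolate the principal branch of `z ^ (1 / m)` at the roots of `Q`; as no root lies on the
branch cut, the data are conjugation-invariant and so is the interpolant. Repeated factors are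
then absorbed by Newton's method, which applies because `X` is a unit modulo `Q`. Now
`A = p(B)` satisfies `A ^ m = B`, and as a real polynomial in `B` it lies in the real algebra
`Ω` and satisfies `H p(B) = p(Bᴴ) H = p(B)ᴴ H`.
-/

open Polynomial ComplexConjugate

theorem Polynomial.exists_map_eq_of_map_conj_eq {P : ℂ[X]} (h : P.map (starRingEnd ℂ) = P) :
    ∃ p : ℝ[X], p.map (algebraMap ℝ ℂ) = P := by
  rw [← mem_lifts, lifts_iff_coeff_lifts]
  intro i
  obtain ⟨r, hr⟩ := Complex.conj_eq_iff_real.mp (by simpa using congrArg (coeff · i) h)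
  exact ⟨r, hr.symm⟩

theorem Lagrange.eval_interpolate_id {F : Type*} [Field F] [DecidableEq F] {s : Finset F}
    (φ : F → F) {z : F} (hz : z ∈ s) : (interpolate s id φ).eval z = φ z :=
  eval_interpolate_at_node φ Function.injective_id.injOn hz

theorem Lagrange.map_conj_interpolate {s : Finset ℂ} {φ : ℂ → ℂ} (hs : ∀ z ∈ s, conj z ∈ s)
    (hφ : ∀ z ∈ s, φ (conj z) = conj (φ z)) :
    (Lagrange.interpolate s id φ).map (starRingEnd ℂ) = Lagrange.interpolate s id φ := by
  have hinj : Set.InjOn id (s : Set ℂ) := Function.injective_id.injOn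
  refine Lagrange.eq_interpolate_of_eval_eq φ hinj
    ((degree_map _ _).trans_lt (Lagrange.degree_interpolate_lt φ hinj)) fun z hz ↦ ?_
  rw [id, ← Complex.conj_conj z, eval_map, eval₂_at_apply, eval_interpolate_id φ (hs z hz),
    hφ z hz, Complex.conj_conj, Complex.conj_conj]

theorem Polynomial.map_dvd_of_squarefree {K L : Type*} [Field K] [PerfectField K] [Field L]
    [IsAlgClosed L] [Algebra K L] {Q : K[X]} (hQ : Squarefree Q) {F : L[X]}
    (hF : ∀ z, aeval z Q = 0 → F.IsRoot z) : Q.map (algebraMap K L) ∣ F := by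
  by_cases hF0 : F = 0
  · simp [hF0]
  have hQ0 : Q.map (algebraMap K L) ≠ 0 := Polynomial.map_ne_zero hQ.ne_zero
  rw [IsAlgClosed.dvd_iff_roots_le_roots hQ0 hF0,
    Multiset.le_iff_subset (nodup_roots (PerfectField.separable_iff_squarefree.mpr hQ).map)]
  intro z hz
  rw [mem_roots hF0]
  exact hF z (by simpa [aeval_def, eval_map, hQ0] using hz)

theorem Polynomial.exists_dvd_pow_sub_X_of_squarefree {Q : ℝ[X]} (hQ : Squarefree Q)
    (hreal : ∀ x : ℝ, ¬ Q.IsRoot x) {m : ℕ} (hm : m ≠ 0) : ∃ p : ℝ[X], Q ∣ p ^ m - X := by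
  set t := (Q.aroots ℂ).toFinset
  have hmem : ∀ z, z ∈ t ↔ aeval z Q = 0 := by
    simp [t, Polynomial.map_ne_zero hQ.ne_zero]
  have harg : ∀ z ∈ t, z.arg ≠ Real.pi := fun z hz harg ↦ by
    have hz_eq : z = (z.re : ℂ) := Complex.ext rfl (by simp [(Complex.arg_eq_pi_iff.mp harg).2])
    have h := (hmem z).mp hz
    rw [hz_eq, ← Complex.coe_algebraMap, aeval_algebraMap_apply] at h
    exact hreal z.re (by simpa using h)
  set φ : ℂ → ℂ := fun z ↦ z ^ ((m : ℂ)⁻¹)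
  obtain ⟨p, hp⟩ := exists_map_eq_of_map_conj_eq (Lagrange.map_conj_interpolate (φ := φ)
    (fun z hz ↦ by rw [hmem, aeval_conj, (hmem z).mp hz, map_zero])
    (fun z hz ↦ by simpa [φ] using Complex.conj_cpow z (m : ℂ)⁻¹ (harg z hz)))
  refine ⟨p, ?_⟩
  rw [← map_dvd_map' (algebraMap ℝ ℂ), Polynomial.map_sub, Polynomial.map_pow, map_X, hp]
  refine map_dvd_of_squarefree hQ fun z hz ↦ ?_
  rw [IsRoot, eval_sub, eval_pow, Lagrange.eval_interpolate_id φ ((hmem z).mpr hz),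
    Complex.cpow_nat_inv_pow z hm, eval_X, sub_self]

theorem exists_mul_dvd_pow_sub_of_dvd {R : Type*} [CommRing R] {r q f p : R} {m : ℕ}
    (hm : m ≠ 0) (hmu : IsUnit (m : R)) (hrf : IsCoprime r f) (hrq : r ∣ q)
    (hp : q ∣ p ^ m - f) : ∃ p', q * r ∣ p' ^ m - f := by
  have hrp : IsCoprime r p := by
    obtain ⟨k, hk⟩ := hrq.trans hp
    rw [← IsCoprime.pow_right_iff (Nat.pos_of_ne_zero hm), sub_eq_iff_eq_add'.mp hk]
    exact hrf.add_mul_left_right k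
  obtain ⟨a, b, hab⟩ := (isCoprime_mul_unit_left_right hmu r (p ^ (m - 1))).mpr hrp.pow_right
  obtain ⟨g, hg⟩ := hp
  obtain ⟨s, rfl⟩ := hrq
  -- Newton's step `p' = p - b g q`, where `b` inverts the derivative `m p ^ (m - 1)` modulo `r`
  obtain ⟨c, hc⟩ := binomExpansion (X ^ m) p (-(b * g * (r * s)))
  simp only [eval_pow, eval_X, derivative_X_pow, eval_mul, eval_C, ← sub_eq_add_neg] at hc
  exact ⟨p - b * g * (r * s), g * a + c * b ^ 2 * g ^ 2 * s,
    by linear_combination hc + hg - r * s * g * hab⟩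

theorem Polynomial.exists_dvd_pow_sub_X {Q : ℝ[X]} (hQ : Q ≠ 0) (hreal : ∀ x : ℝ, ¬ Q.IsRoot x)
    {m : ℕ} (hm : m ≠ 0) : ∃ p : ℝ[X], Q ∣ p ^ m - X := by
  induction Q using IsWellFounded.induction (DvdNotUnit (α := ℝ[X])) with
  | ind Q ih =>
    by_cases hsq : Squarefree Q
    · exact exists_dvd_pow_sub_X_of_squarefree hsq hreal hm
    obtain ⟨r, hrr, hr⟩ : ∃ r, r * r ∣ Q ∧ ¬ IsUnit r := by simpa [Squarefree] using hsq
    obtain ⟨Q', rfl⟩ := (dvd_mul_right r r).trans hrr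
    have hr0 : r ≠ 0 := left_ne_zero_of_mul hQ
    have hQ' : Q' ≠ 0 := right_ne_zero_of_mul hQ
    obtain ⟨p, hp⟩ := ih Q' ⟨hQ', r, hr, mul_comm r Q'⟩ hQ'
      (fun x hx ↦ hreal x (hx.dvd (dvd_mul_left Q' r)))
    have hrX : IsCoprime r X := by
      refine (irreducible_X.coprime_iff_not_dvd.mpr fun hX ↦ hreal 0 ?_).symm
      rw [IsRoot.def, ← coeff_zero_eq_eval_zero]
      exact X_dvd_iff.mp (hX.trans (dvd_mul_right r Q'))
    have hmu : IsUnit (m : ℝ[X]) := by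
      simpa using (isUnit_C (x := (m : ℝ))).mpr (by simpa using hm)
    rw [mul_comm]
    exact exists_mul_dvd_pow_sub_of_dvd hm hmu hrX
      ((mul_dvd_mul_iff_left hr0).mp hrr) hp

section Omega

variable {k : ℕ}

theorem omegaMap_mul (A₁ A₂ B₁ B₂ : Matrix (Fin k) (Fin k) ℂ) :
    omegaMap A₁ A₂ * omegaMap B₁ B₂ =
      omegaMap (A₁ * B₁ - A₂.map (starRingEnd ℂ) * B₂)
        (A₂ * B₁ + A₁.map (starRingEnd ℂ) * B₂) := by
  simp only [omegaMap, reindex_apply, submatrix_mul_equiv, fromBlocks_multiply]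
  congr 1
  rw [fromBlocks_inj]
  refine ⟨by noncomm_ring, ?_, by noncomm_ring, ?_⟩ <;> ext i j <;>
    simp only [neg_mul, Matrix.add_apply, Matrix.neg_apply, mul_apply, map_apply, sub_eq_add_neg,
      map_add, map_sum, map_mul, map_neg, RingHomCompTriple.comp_apply, RingHom.id_apply] <;> ring

theorem omegaMap_add (A₁ A₂ B₁ B₂ : Matrix (Fin k) (Fin k) ℂ) :
    omegaMap A₁ A₂ + omegaMap B₁ B₂ = omegaMap (A₁ + B₁) (A₂ + B₂) := by
  ext i j
  obtain ⟨a | a, rfl⟩ := (finTwoMul k).surjective i <;>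
    obtain ⟨b | b, rfl⟩ := (finTwoMul k).surjective j <;> simp [omegaMap, add_comm]

theorem omegaMap_algebraMap (r : ℝ) :
    omegaMap (algebraMap ℝ (Matrix (Fin k) (Fin k) ℂ) r) 0 = algebraMap ℝ _ r := by
  ext i j
  obtain ⟨a | a, rfl⟩ := (finTwoMul k).surjective i <;>
    obtain ⟨b | b, rfl⟩ := (finTwoMul k).surjective j <;> simp [omegaMap, algebraMap_matrix_apply]

variable (k) in
def omegaSubalgebra : Subalgebra ℝ (Matrix (Fin (2 * k)) (Fin (2 * k)) ℂ) where
  carrier := {M | InOmega M}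
  mul_mem' := by
    rintro _ _ ⟨A₁, A₂, rfl⟩ ⟨B₁, B₂, rfl⟩
    exact ⟨_, _, omegaMap_mul A₁ A₂ B₁ B₂⟩
  add_mem' := by
    rintro _ _ ⟨A₁, A₂, rfl⟩ ⟨B₁, B₂, rfl⟩
    exact ⟨_, _, omegaMap_add A₁ A₂ B₁ B₂⟩
  algebraMap_mem' r := ⟨_, 0, (omegaMap_algebraMap r).symm⟩

theorem InOmega.aeval {B : Matrix (Fin (2 * k)) (Fin (2 * k)) ℂ} (hB : InOmega B) (p : ℝ[X]) :
    InOmega (aeval B p) :=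
  Algebra.adjoin_le (S := omegaSubalgebra k) (Set.singleton_subset_iff.mpr hB)
    (aeval_mem_adjoin_singleton ℝ B)

end Omega

theorem SemiconjBy.aeval {R A : Type*} [CommSemiring R] [Semiring A] [Algebra R A] {h a b : A}
    (hab : SemiconjBy h a b) (p : R[X]) : SemiconjBy h (aeval a p) (aeval b p) := by
  induction p using Polynomial.induction_on' with
  | add p q hp hq => simpa only [map_add] using hp.add_right hq
  | monomial n r =>
    simp only [aeval_monomial]
    exact SemiconjBy.mul_right (Algebra.commutes r h).symm (hab.pow_right n)

theorem Polynomial.star_aeval {R A : Type*} [CommSemiring R] [StarRing R] [TrivialStar R]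
    [Semiring A] [StarRing A] [Algebra R A] [StarModule R A] (a : A) (p : R[X]) :
    star (aeval a p) = aeval (star a) p := by
  induction p using Polynomial.induction_on' with
  | add p q hp hq => simp only [map_add, star_add, hp, hq]
  | monomial n r =>
    rw [aeval_monomial, aeval_monomial, star_mul, star_pow, ← algebraMap_star_comm, star_trivial r]
    exact (Algebra.commutes r (star a ^ n)).symm

theorem mem_spectrum_of_isRoot_minpoly {K A : Type*} [Field K] [Ring A] [Algebra K A] {a : A}
    (ha : IsIntegral K a) {x : K} (hx : (minpoly K a).IsRoot x) : x ∈ spectrum K a := by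
  obtain ⟨q, hq⟩ := dvd_iff_isRoot.mpr hx
  have hq0 : q ≠ 0 := by
    rintro rfl
    exact minpoly.ne_zero ha (by simpa using hq)
  rw [spectrum.mem_iff]
  intro hunit
  have hq_aeval : aeval a q = 0 := by
    have := minpoly.aeval K a
    rw [hq, map_mul, map_sub, aeval_X, aeval_C, ← neg_sub, neg_mul, neg_eq_zero] at this
    exact hunit.mul_right_eq_zero.mp this
  have := minpoly.degree_le_of_ne_zero K a hq0 hq_aeval
  rw [hq, degree_mul, degree_X_sub_C, degree_eq_natDegree hq0] at this
  norm_cast at this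
  omega

theorem exists_root_nonreal_spectrum_general {n : ℕ} (m : ℕ) (hm : 0 < m)
    (H B : Matrix (Fin (2 * (2 * n))) (Fin (2 * (2 * n))) ℂ)
    (hBΩ : InOmega B) (hBsa : H * B = Bᴴ * H)
    (hspec : ∀ μ ∈ spectrum ℂ B, μ.im ≠ 0) :
    ∃ A : Matrix (Fin (2 * (2 * n))) (Fin (2 * (2 * n))) ℂ,
      InOmega A ∧ H * A = Aᴴ * H ∧ A ^ m = B := by
  have hB : IsIntegral ℝ B := Algebra.IsIntegral.isIntegral B
  have hreal : ∀ x : ℝ, ¬ (minpoly ℝ B).IsRoot x := fun x hx ↦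
    hspec x ((spectrum.algebraMap_mem_iff ℂ).mpr (mem_spectrum_of_isRoot_minpoly hB hx)) (by simp)
  obtain ⟨p, g, hpg⟩ := exists_dvd_pow_sub_X (minpoly.ne_zero hB) hreal hm.ne'
  refine ⟨aeval B p, hBΩ.aeval p, ?_, ?_⟩
  · rw [← star_eq_conjTranspose, star_aeval, star_eq_conjTranspose]
    exact SemiconjBy.aeval hBsa p
  · have h := congrArg (aeval B) hpg
    rwa [map_sub, map_pow, aeval_X, map_mul, minpoly.aeval, zero_mul, sub_eq_zero] at h

/-- **Theorem 3.4.** An `H̃`-selfadjoint matrix in `Ω_{4n}` whose spectrum contains no real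
numbers has an `H̃`-selfadjoint `m`th root in `Ω_{4n}`. -/
theorem exists_root_nonreal_spectrum {n : ℕ} (m : ℕ) (hm : 0 < m)
    (H B : Matrix (Fin (2 * (2 * n))) (Fin (2 * (2 * n))) ℂ)
    (hHΩ : InOmega H) (hHu : IsUnit H) (hHherm : H.IsHermitian)
    (hBΩ : InOmega B) (hBsa : H * B = Bᴴ * H)
    (hspec : ∀ μ ∈ spectrum ℂ B, μ.im ≠ 0) :
    ∃ A : Matrix (Fin (2 * (2 * n))) (Fin (2 * (2 * n))) ℂ,
      InOmega A ∧ H * A = Aᴴ * H ∧ A ^ m = B :=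
  exists_root_nonreal_spectrum_general m hm H B hBΩ hBsa hspec

end
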